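/- arXiv:1712.00357 — 6 statements merged into one kernel-verified Lean document; each statement's English description precedes it below -/
import Mathlib

section
/- Let C be a nonempty convex subset of a separable Hilbert space X with orthonormal basis (e_k), and let J = ∪_{x∈C} supp(x). If J is finite, then there exists x̄ ∈ C with supp(x̄) = J. -/
/-!
Along the segment from `z` to `x`, a linear functional takes the values `(1 - t) a + t c`, an
affine function of `t` that vanishes at most once unless `a = c = 0`. So if each of finitely many
functionals is nonzero at `z` or at `x`, all but finitely many `t ∈ (0, 1)` give a point of the
segment where all of them are nonzero. Adding the coordinates `⟪e_k, ·⟫`, `k ∈ J`, one at a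
time yields `x̄`.
-/

theorem subsingleton_setOf_convex_combination_eq_zero {a c : ℝ} (h : a ≠ 0 ∨ c ≠ 0) :
    {t : ℝ | (1 - t) * a + t * c = 0}.Subsingleton := by
  intro t₁ h₁ t₂ h₂
  simp only [Set.mem_ofPred_eq] at h₁ h₂
  have hprod : (t₂ - t₁) * (c - a) = 0 := by linear_combination h₂ - h₁
  rcases mul_eq_zero.1 hprod with ht | hca
  · linarith
  · have ha : a = 0 := by linear_combination h₁ - t₁ * hca
    have hc : c = 0 := by linarith
    tauto

section

variable {E ι : Type*} [AddCommGroup E] [Module ℝ E] {C : Set E}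

theorem Convex.exists_mem_forall_ne_zero_of_mem_of_mem (hC : Convex ℝ C) {z x : E}
    (hz : z ∈ C) (hx : x ∈ C) (f : ι → E →ₗ[ℝ] ℝ) (s : Finset ι)
    (hs : ∀ i ∈ s, f i z ≠ 0 ∨ f i x ≠ 0) : ∃ y ∈ C, ∀ i ∈ s, f i y ≠ 0 := by
  set bad : Set ℝ := ⋃ i ∈ s, {t : ℝ | (1 - t) * f i z + t * f i x = 0}
  have hbad : bad.Finite := s.finite_toSet.biUnion fun i hi =>
    (subsingleton_setOf_convex_combination_eq_zero (hs i hi)).finite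
  obtain ⟨t, ⟨ht₀, ht₁⟩, htbad⟩ := ((Set.Ioo_infinite zero_lt_one).sdiff hbad).nonempty
  refine ⟨(1 - t) • z + t • x, hC hz hx (by linarith) ht₀.le (by ring), fun i hi hzero => ?_⟩
  refine htbad (Set.mem_biUnion hi ?_)
  simpa only [Set.mem_ofPred_eq, map_add, map_smul, smul_eq_mul] using hzero

theorem Convex.exists_mem_forall_ne_zero (hC : Convex ℝ C) (hne : C.Nonempty)
    (f : ι → E →ₗ[ℝ] ℝ) (s : Finset ι) (hs : ∀ i ∈ s, ∃ x ∈ C, f i x ≠ 0) :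
    ∃ z ∈ C, ∀ i ∈ s, f i z ≠ 0 := by
  classical
  induction s using Finset.induction with
  | empty => exact hne.elim fun z hz => ⟨z, hz, by simp⟩
  | insert k s _ ih =>
    obtain ⟨z, hzC, hz⟩ := ih fun i hi => hs i (Finset.mem_insert_of_mem hi)
    obtain ⟨x, hxC, hx⟩ := hs k (Finset.mem_insert_self k s)
    refine hC.exists_mem_forall_ne_zero_of_mem_of_mem hzC hxC f _ fun i hi => ?_
    rcases Finset.mem_insert.1 hi with rfl | hi
    · exact Or.inr hx
    · exact Or.inl (hz i hi)

end

theorem stmt_4_general {X : Type*} [NormedAddCommGroup X] [InnerProductSpace ℝ X]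
    (b : HilbertBasis ℕ ℝ X) (C : Set X) (hne : C.Nonempty) (hconv : Convex ℝ C)
    (hJfin : Set.Finite {k : ℕ | ∃ x ∈ C, b.repr x k ≠ 0}) :
    ∃ xbar ∈ C, {k : ℕ | b.repr xbar k ≠ 0} = {k : ℕ | ∃ x ∈ C, b.repr x k ≠ 0} := by
  have hcoord (x : X) (k : ℕ) : b.repr x k = innerₗ X (b k) x := by
    rw [b.repr_apply_apply, innerₗ_apply_apply]
  obtain ⟨z, hzC, hz⟩ := hconv.exists_mem_forall_ne_zero hne (fun k => innerₗ X (b k))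
    hJfin.toFinset fun k hk => by
      simpa only [Set.mem_ofPred_eq, hcoord] using hJfin.mem_toFinset.1 hk
  refine ⟨z, hzC, Set.Subset.antisymm (fun k hk => ⟨z, hzC, hk⟩) fun k hk => ?_⟩
  simpa only [Set.mem_ofPred_eq, hcoord] using hz k (hJfin.mem_toFinset.2 hk)

/-- Let `C` be a nonempty convex subset of a separable Hilbert space `X` with orthonormal
basis `(e_k)_{k∈ℕ}`, and let `J = ⋃_{x ∈ C} supp x`, where `supp x = {k : ⟨x, e_k⟩ ≠ 0}`.
If `J` is finite, then there exists `x̄ ∈ C` with `supp x̄ = J`. -/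
theorem stmt_4 {X : Type*} [NormedAddCommGroup X] [InnerProductSpace ℝ X] [CompleteSpace X]
    (b : HilbertBasis ℕ ℝ X) (C : Set X) (hne : C.Nonempty) (hconv : Convex ℝ C)
    (hJfin : Set.Finite {k : ℕ | ∃ x ∈ C, b.repr x k ≠ 0}) :
    ∃ xbar ∈ C, {k : ℕ | b.repr xbar k ≠ 0} = {k : ℕ | ∃ x ∈ C, b.repr x k ≠ 0} :=
  stmt_4_general b C hne hconv hJfin
end

section
/- Let (I_k)_{k∈ℕ} be a family of proper closed intervals of ℝ with [−ω, ω] ⊂ I_k for all k, for some ω > 0. Define B = { x ∈ ℓ²(ℕ) : x_k ∈ I_k for all k }. Then the interior of B in ℓ²(ℕ) equals { x ∈ ℓ²(ℕ) : x_k ∈ int I_k for all k }. -/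
/-!
The coordinates of a point of `ℓ²` tend to `0`, so all but finitely many of them lie well inside
the common neighbourhood `[-ω, ω]` of `0`; only finitely many coordinate constraints are then
active near the point, and a finite intersection of open conditions is open. Conversely, moving a
single coordinate is a continuous map into `ℓ²`, which pulls the interior of `B` back into the
interior of `I_k`.
-/

open Filter Topology

namespace lp

variable {α : Type*} {E : α → Type*} [∀ i, NormedAddCommGroup (E i)] {p : ENNReal}

theorem tendsto_norm_cofinite_zero (hp : p ≠ ⊤) (x : lp E p) :
    Tendsto (fun i ↦ ‖x i‖) cofinite (𝓝 0) := by
  rcases eq_or_ne p 0 with rfl | hp₀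
  · refine tendsto_const_nhds.congr' ?_
    filter_upwards [(memℓp_zero_iff.mp x.2).compl_mem_cofinite] with i hi
    simp_all
  · have hp' : 0 < p.toReal := ENNReal.toReal_pos hp₀ hp
    have hpow := ((x.2.summable hp').tendsto_cofinite_zero).rpow_const (p := p.toReal⁻¹)
      (Or.inr (inv_nonneg.mpr hp'.le))
    rw [Real.zero_rpow (inv_ne_zero hp'.ne')] at hpow
    refine hpow.congr fun i ↦ ?_
    rw [← Real.rpow_mul (norm_nonneg _), mul_inv_cancel₀ hp'.ne', Real.rpow_one]

variable [Fact (1 ≤ p)]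

theorem interior_setOf_forall_mem_subset (S : ∀ i, Set (E i)) :
    interior {x : lp E p | ∀ i, x i ∈ S i} ⊆ {x | ∀ i, x i ∈ interior (S i)} := by
  classical
  intro x hx i
  let moveCoord : E i → lp E p := fun z ↦ x + lp.single p i (z - x i)
  have hcont : Continuous moveCoord :=
    continuous_const.add ((isometry_single i).continuous.comp (continuous_sub_right _))
  have hpre : moveCoord ⁻¹' {x : lp E p | ∀ i, x i ∈ S i} ⊆ S i := fun z hz ↦ by
    simpa [moveCoord, lp.single_apply_self] using hz i
  refine interior_mono hpre (preimage_interior_subset_interior_preimage hcont ?_)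
  simpa [moveCoord] using hx

theorem subset_interior_setOf_forall_mem (hp : p ≠ ⊤) {S : ∀ i, Set (E i)} {ω : ℝ}
    (hω : 0 < ω) (hS : ∀ i, Metric.ball 0 ω ⊆ S i) :
    {x : lp E p | ∀ i, x i ∈ interior (S i)} ⊆ interior {x : lp E p | ∀ i, x i ∈ S i} := by
  intro x hx
  set F := {i | ¬ ‖x i‖ < ω / 2}
  have hF : F.Finite :=
    eventually_cofinite.mp ((tendsto_norm_cofinite_zero hp x).eventually_lt_const (by positivity))
  let U := Metric.ball x (ω / 2) ∩ ⋂ i ∈ F, (fun y : lp E p ↦ y i) ⁻¹' interior (S i)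
  have hU : IsOpen U := Metric.isOpen_ball.inter <| hF.isOpen_biInter fun i _ ↦
    isOpen_interior.preimage (lipschitzWith_one_eval p i).continuous
  have hxU : x ∈ U := ⟨Metric.mem_ball_self (by positivity), Set.mem_iInter₂.mpr fun i _ ↦ hx i⟩
  refine mem_interior.mpr ⟨U, fun y ⟨hy, hyF⟩ i ↦ ?_, hU, hxU⟩
  by_cases hi : i ∈ F
  · exact interior_subset (Set.mem_iInter₂.mp hyF i hi)
  · have hyi : ‖y i - x i‖ < ω / 2 := by
      have hle := norm_apply_le_norm (zero_lt_one.trans_le Fact.out).ne' (y - x) i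
      simpa using hle.trans_lt (mem_ball_iff_norm.mp hy)
    refine hS i (mem_ball_zero_iff.mpr ?_)
    calc ‖y i‖ ≤ ‖y i - x i‖ + ‖x i‖ := norm_le_norm_sub_add _ _
      _ < ω := by simp only [F, Set.mem_ofPred_eq, not_not] at hi; linarith

end lp

theorem stmt_6_general (ω : ℝ) (hω : 0 < ω) (I : ℕ → Set ℝ)
    (hsub : ∀ k, Set.Icc (-ω) ω ⊆ I k) :
    interior {x : lp (fun _ : ℕ => ℝ) 2 | ∀ k, x k ∈ I k}
      = {x : lp (fun _ : ℕ => ℝ) 2 | ∀ k, x k ∈ interior (I k)} := by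
  have hball : ∀ k, Metric.ball 0 ω ⊆ I k := fun k ↦ by
    simpa [Real.ball_eq_Ioo] using Set.Ioo_subset_Icc_self.trans (hsub k)
  exact (lp.interior_setOf_forall_mem_subset I).antisymm
    (lp.subset_interior_setOf_forall_mem ENNReal.ofNat_ne_top hω hball)

/-- Let `(I_k)` be a family of proper closed intervals of `ℝ` with `[−ω, ω] ⊆ I_k` for all
`k`, where `ω > 0`.  Let `B = {x ∈ ℓ²(ℕ) : x_k ∈ I_k for all k}`.  Then the interior of `B`
in `ℓ²(ℕ)` equals `{x : x_k ∈ int I_k for all k}`. -/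
theorem stmt_6 (ω : ℝ) (hω : 0 < ω) (I : ℕ → Set ℝ)
    (hcl : ∀ k, IsClosed (I k)) (hconn : ∀ k, (I k).OrdConnected)
    (hproper : ∀ k, I k ≠ Set.univ) (hsub : ∀ k, Set.Icc (-ω) ω ⊆ I k) :
    interior {x : lp (fun _ : ℕ => ℝ) 2 | ∀ k, x k ∈ I k}
      = {x : lp (fun _ : ℕ => ℝ) 2 | ∀ k, x k ∈ interior (I k)} :=
  stmt_6_general ω hω I hsub
end

section
/- Let (g_k)_{k∈ℕ} be proper convex lsc functions on ℝ with g_k(0) = 0 = inf g_k, and g(x) = Σ_k g_k(x_k) on ℓ²(ℕ). Then for all x, x* ∈ ℓ²(ℕ): x* ∈ ∂g(x) if and only if x*_k ∈ ∂g_k(x_k) for every k. -/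
open scoped ENNReal RealInnerProductSpace

/-!
Both sides are inequalities of the form `a + r ≤ b` with `a, b ∈ [0, ∞]` and `r` real. Testing the
global inequality at `y = 0` (where `g = 0`) shows `g(x) < ∞`; testing it at `y` that differs from
`x` only in the coordinate `k` then leaves, after cancelling the common finite tail of the two
sums, exactly the `k`-th coordinate inequality. Conversely, the coordinate inequalities sum up,
because `k ↦ x*_k (y_k - x_k)` is summable with sum `⟪x*, y - x⟫`.
-/

namespace EReal

theorem coe_ennreal_add_coe_le_iff (a b : ℝ≥0∞) (r : ℝ) :
    (a : EReal) + r ≤ b ↔ b = ⊤ ∨ a ≠ ⊤ ∧ a.toReal + r ≤ b.toReal := by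
  rcases eq_or_ne b ⊤ with rfl | hb
  · simp
  rcases eq_or_ne a ⊤ with rfl | ha
  · simp [hb]
  · rw [← ENNReal.ofReal_toReal ha, ← ENNReal.ofReal_toReal hb, coe_ennreal_ofReal,
      coe_ennreal_ofReal, max_eq_left ENNReal.toReal_nonneg, max_eq_left ENNReal.toReal_nonneg,
      ← coe_add, EReal.coe_le_coe_iff]
    simp [hb]

theorem ne_top_of_coe_ennreal_add_coe_le {a b : ℝ≥0∞} {r : ℝ} (h : (a : EReal) + r ≤ b)
    (hb : b ≠ ⊤) : a ≠ ⊤ := by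
  rw [coe_ennreal_add_coe_le_iff] at h
  tauto

theorem coe_ennreal_add_add_coe_le_iff {a b c : ℝ≥0∞} (hc : c ≠ ⊤) (r : ℝ) :
    ((a + c : ℝ≥0∞) : EReal) + r ≤ ((b + c : ℝ≥0∞) : EReal) ↔ (a : EReal) + r ≤ b := by
  rw [coe_ennreal_add_coe_le_iff, coe_ennreal_add_coe_le_iff]
  rcases eq_or_ne a ⊤ with rfl | ha
  · simp [hc]
  rcases eq_or_ne b ⊤ with rfl | hb
  · simp
  simp only [ne_eq, ENNReal.add_eq_top, hc, ha, hb, or_self, not_false_eq_true, true_and,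
    false_or, ENNReal.toReal_add ha hc, ENNReal.toReal_add hb hc]
  constructor <;> intro h <;> linarith

theorem coe_tsum_add_le_coe_tsum {ι : Type*} {a b : ι → ℝ≥0∞} {r : ι → ℝ} {R : ℝ}
    (hr : HasSum r R) (h : ∀ i, (a i : EReal) + r i ≤ b i) :
    ((∑' i, a i : ℝ≥0∞) : EReal) + R ≤ ((∑' i, b i : ℝ≥0∞) : EReal) := by
  rw [coe_ennreal_add_coe_le_iff]
  by_cases hb : ∑' i, b i = ⊤
  · exact Or.inl hb
  have hb_fin : ∀ i, b i ≠ ⊤ := fun i => ne_top_of_le_ne_top hb (ENNReal.le_tsum i)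
  have ha_fin : ∀ i, a i ≠ ⊤ := fun i => ne_top_of_coe_ennreal_add_coe_le (h i) (hb_fin i)
  have hab : ∀ i, (a i).toReal + r i ≤ (b i).toReal := fun i =>
    (((coe_ennreal_add_coe_le_iff _ _ _).1 (h i)).resolve_left (hb_fin i)).2
  -- `∑ a < ∞` because `a ≤ b + |r|` and a real summable family is absolutely summable.
  have ha_le : ∀ i, a i ≤ b i + ENNReal.ofReal |r i| := fun i => by
    rw [← ENNReal.ofReal_toReal (ha_fin i), ← ENNReal.ofReal_toReal (hb_fin i),
      ← ENNReal.ofReal_add ENNReal.toReal_nonneg (abs_nonneg _)]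
    exact ENNReal.ofReal_le_ofReal (by linarith [hab i, neg_abs_le (r i)])
  have ha : ∑' i, a i ≠ ⊤ := by
    refine ne_top_of_le_ne_top ?_ (ENNReal.tsum_le_tsum ha_le)
    rw [ENNReal.tsum_add, ← ENNReal.ofReal_tsum_of_nonneg (fun _ => abs_nonneg _)
      hr.summable.abs]
    exact ENNReal.add_ne_top.mpr ⟨hb, ENNReal.ofReal_ne_top⟩
  refine Or.inr ⟨ha, ?_⟩
  rw [ENNReal.tsum_toReal_eq ha_fin, ENNReal.tsum_toReal_eq hb_fin, ← hr.tsum_eq,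
    ← (ENNReal.summable_toReal ha).tsum_add hr.summable]
  exact (ENNReal.summable_toReal ha).add hr.summable |>.tsum_le_tsum hab
    (ENNReal.summable_toReal hb)

end EReal

theorem ENNReal.exists_tsum_eq_add_and_tsum_eq_add {β : Type*} [DecidableEq β]
    {f f' : β → ℝ≥0∞} (k : β) (h : ∀ j, j ≠ k → f j = f' j) :
    ∃ T, ∑' j, f j = f k + T ∧ ∑' j, f' j = f' k + T := by
  refine ⟨_, ENNReal.tsum_eq_add_tsum_ite k, ?_⟩
  rw [ENNReal.tsum_eq_add_tsum_ite k]
  congr 1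
  refine tsum_congr fun j => ?_
  split_ifs with hj
  · rfl
  · exact (h j hj).symm

theorem lp.coeFn_add_single_sub {α E : Type*} [DecidableEq α] [NormedAddCommGroup E]
    {p : ℝ≥0∞} [Fact (1 ≤ p)] (x : lp (fun _ : α => E) p) (k : α) (t : E) :
    ⇑(x + lp.single p k (t - x k) : lp (fun _ : α => E) p) = Function.update (⇑x) k t := by
  ext j
  rcases eq_or_ne j k with rfl | hj
  · simp
  · simp [hj]

theorem lp.hasSum_mul {ι : Type*} (u v : lp (fun _ : ι => ℝ) 2) :
    HasSum (fun k => u k * v k) ⟪u, v⟫ := by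
  simpa [RCLike.inner_apply, mul_comm] using lp.hasSum_inner (𝕜 := ℝ) u v

theorem stmt_8_general (g : ℕ → ℝ → ℝ≥0∞)
    (h0 : ∀ k, g k 0 = 0)
    (x xs : lp (fun _ : ℕ => ℝ) 2) :
    (∀ y : lp (fun _ : ℕ => ℝ) 2,
        ((∑' k, g k (x k) : ℝ≥0∞) : EReal) + ((⟪xs, y - x⟫ : ℝ) : EReal)
          ≤ ((∑' k, g k (y k) : ℝ≥0∞) : EReal))
    ↔ (∀ k : ℕ, ∀ t : ℝ,
        ((g k (x k) : ℝ≥0∞) : EReal) + ((xs k * (t - x k) : ℝ) : EReal)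
          ≤ ((g k t : ℝ≥0∞) : EReal)) := by
  constructor
  · intro H k t
    have hx_fin : ∑' j, g j (x j) ≠ ⊤ :=
      EReal.ne_top_of_coe_ennreal_add_coe_le (H 0) (by simp [h0])
    set y := x + lp.single 2 k (t - x k)
    have hy : ⇑y = Function.update (⇑x) k t := lp.coeFn_add_single_sub x k t
    have hinner : ⟪xs, y - x⟫ = xs k * (t - x k) := by
      rw [add_sub_cancel_left, lp.inner_single_right]
      simp [mul_comm]
    obtain ⟨T, hxT, hyT⟩ := ENNReal.exists_tsum_eq_add_and_tsum_eq_add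
      (f := fun j => g j (x j)) (f' := fun j => g j (y j)) k
      (fun j hj => by simp [hy, Function.update_of_ne hj])
    have hT : T ≠ ⊤ := fun h => hx_fin (by simp [hxT, h])
    have Hy := H y
    rw [hxT, hyT, hinner, hy, Function.update_self] at Hy
    exact (EReal.coe_ennreal_add_add_coe_le_iff hT _).1 Hy
  · intro hc y
    refine EReal.coe_tsum_add_le_coe_tsum ?_ fun j => hc j (y j)
    simpa [lp.coeFn_sub] using lp.hasSum_mul xs (y - x)

/-- Let `(g_k)` be proper convex lsc functions `ℝ → [0,+∞]` with `g_k(0) = 0 = inf g_k`,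
and `g(x) = Σ_k g_k(x_k)` on `ℓ²(ℕ)`.  Then for all `x, x* ∈ ℓ²(ℕ)`:
`x* ∈ ∂g(x)` if and only if `x*_k ∈ ∂g_k(x_k)` for every `k`. -/
theorem stmt_8 (g : ℕ → ℝ → ℝ≥0∞)
    (hconv : ∀ k, ∀ s t a b : ℝ, 0 ≤ a → 0 ≤ b → a + b = 1 →
      g k (a * s + b * t) ≤ ENNReal.ofReal a * g k s + ENNReal.ofReal b * g k t)
    (hlsc : ∀ k, LowerSemicontinuous (g k))
    (h0 : ∀ k, g k 0 = 0)
    (x xs : lp (fun _ : ℕ => ℝ) 2) :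
    (∀ y : lp (fun _ : ℕ => ℝ) 2,
        ((∑' k, g k (x k) : ℝ≥0∞) : EReal) + ((⟪xs, y - x⟫ : ℝ) : EReal)
          ≤ ((∑' k, g k (y k) : ℝ≥0∞) : EReal))
    ↔ (∀ k : ℕ, ∀ t : ℝ,
        ((g k (x k) : ℝ≥0∞) : EReal) + ((xs k * (t - x k) : ℝ) : EReal)
          ≤ ((g k t : ℝ≥0∞) : EReal)) :=
  stmt_8_general g h0 x xs
end

section
/- Let (I_k)_{k∈ℕ} be proper closed intervals of ℝ with [−ω, ω] ⊂ I_k for all k, for some ω > 0, and let g(x) = Σ_k σ_{I_k}(x_k) on ℓ²(ℕ). Then g is the support function of the set B = { u ∈ ℓ²(ℕ) : u_k ∈ I_k for all k }; equivalently, the Fenchel conjugate g* is the indicator function of B. -/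
/-!
Since `0 ∈ I k`, every `σ_{I_k}` is nonnegative, so `g x` is the supremum of its finite partial
sums. A finite partial sum is either `⊤`, and then already one coordinate of `B` makes
`⟪u, x⟫` unbounded, or each of its terms is attained in the closed set `I k`, and the maximisers
form a finitely supported point of `B`. Conversely `⟪u, x⟫ = ∑ u_k x_k` is dominated termwise
by `g x` for `u ∈ B`. The statement about `g*` is the general fact that the conjugate of the
support function of a closed convex set is its indicator, by Hahn–Banach separation.
-/

open scoped RealInnerProductSpace

noncomputable def supportFun {E : Type*} [NormedAddCommGroup E] [InnerProductSpace ℝ E]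
    (B : Set E) (x : E) : EReal :=
  ⨆ b ∈ B, ((⟪b, x⟫ : ℝ) : EReal)

section InnerProductSpace

variable {E : Type*} [NormedAddCommGroup E] [InnerProductSpace ℝ E] {B : Set E}

theorem le_supportFun {b : E} (hb : b ∈ B) (x : E) : ((⟪b, x⟫ : ℝ) : EReal) ≤ supportFun B x :=
  le_iSup₂ (f := fun b (_ : b ∈ B) => ((⟪b, x⟫ : ℝ) : EReal)) b hb

theorem supportFun_le {x : E} {c : EReal} (h : ∀ b ∈ B, ((⟪b, x⟫ : ℝ) : EReal) ≤ c) :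
    supportFun B x ≤ c :=
  iSup₂_le h

theorem supportFun_zero (hB : B.Nonempty) : supportFun B 0 = 0 := by
  obtain ⟨b, hb⟩ := hB
  exact le_antisymm (supportFun_le fun _ _ => by simp) (by simpa using le_supportFun hb 0)

theorem supportFun_nonneg (h0 : (0 : E) ∈ B) (x : E) : 0 ≤ supportFun B x := by
  simpa using le_supportFun h0 x

theorem iSup_inner_sub_supportFun_of_mem {u : E} (hu : u ∈ B) :
    ⨆ x, ((⟪u, x⟫ : ℝ) : EReal) - supportFun B x = 0 :=
  le_antisymm (iSup_le fun x => EReal.sub_nonpos.2 (le_supportFun hu x))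
    (le_iSup_of_le 0 (by simp [supportFun_zero ⟨u, hu⟩]))

/-- A point outside `B` is strictly separated from it by some `⟪w, ·⟫`; the conjugate then blows
up along the ray `ℝ₊ w`. -/
theorem iSup_inner_sub_supportFun_of_notMem [CompleteSpace E] (hconv : Convex ℝ B)
    (hcl : IsClosed B) {u : E} (hu : u ∉ B) :
    ⨆ x, ((⟪u, x⟫ : ℝ) : EReal) - supportFun B x = ⊤ := by
  obtain ⟨f, c, hfB, hcu⟩ := geometric_hahn_banach_closed_point hconv hcl hu
  set w := (InnerProductSpace.toDual ℝ E).symm f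
  have hw (y : E) : ⟪w, y⟫ = f y := InnerProductSpace.toDual_symm_apply
  rw [EReal.eq_top_iff_forall_lt]
  intro M
  set t := (|M| + 1) / (f u - c)
  have ht : 0 < t := div_pos (by positivity) (sub_pos.2 hcu)
  have hσ : supportFun B (t • w) ≤ ((t * c : ℝ) : EReal) := supportFun_le fun b hb => by
    rw [real_inner_smul_right, real_inner_comm, hw]
    exact_mod_cast mul_le_mul_of_nonneg_left (hfB b hb).le ht.le
  refine lt_iSup_iff.2 ⟨t • w, ?_⟩
  calc (M : EReal) < ((t * f u - t * c : ℝ) : EReal) := by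
        have : t * (f u - c) = |M| + 1 := div_mul_cancel₀ _ (sub_pos.2 hcu).ne'
        exact_mod_cast (le_abs_self M).trans_lt (by linarith)
    _ = ((⟪u, t • w⟫ : ℝ) : EReal) - ((t * c : ℝ) : EReal) := by
        rw [real_inner_smul_right, real_inner_comm, hw, EReal.coe_sub]
    _ ≤ _ := EReal.sub_le_sub le_rfl hσ

end InnerProductSpace

theorem supportFun_real (A : Set ℝ) (t : ℝ) :
    supportFun A t = ⨆ s ∈ A, ((s * t : ℝ) : EReal) := by
  simp only [supportFun, Real.inner_apply]

theorem exists_supportFun_real_eq {A : Set ℝ} (hcl : IsClosed A) (hne : A.Nonempty) {t : ℝ}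
    (htop : supportFun A t ≠ ⊤) : ∃ a ∈ A, supportFun A t = ((a * t : ℝ) : EReal) := by
  rcases eq_or_ne t 0 with rfl | ht
  · obtain ⟨a, ha⟩ := hne
    exact ⟨a, ha, by simp [supportFun_zero ⟨a, ha⟩]⟩
  have hle {a : ℝ} (ha : a ∈ A) : ((a * t : ℝ) : EReal) ≤ supportFun A t := by
    simpa only [Real.inner_apply] using le_supportFun ha t
  have hbdd : BddAbove ((· * t) '' A) := ⟨(supportFun A t).toReal, by
    rintro _ ⟨a, ha, rfl⟩
    exact EReal.coe_le_coe_iff.1 ((hle ha).trans (EReal.le_coe_toReal htop))⟩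
  have hclosed : IsClosed ((· * t) '' A) := (Homeomorph.mulRight₀ t ht).isClosedMap A hcl
  obtain ⟨a, ha, hmax⟩ := hclosed.csSup_mem (hne.image _) hbdd
  refine ⟨a, ha, le_antisymm (supportFun_le fun b hb => ?_) (hle ha)⟩
  rw [Real.inner_apply, EReal.coe_le_coe_iff]
  exact (le_csSup hbdd ⟨b, hb, rfl⟩).trans_eq hmax.symm

theorem EReal.coe_finsetSum {ι : Type*} (s : Finset ι) (f : ι → ℝ) :
    ((∑ i ∈ s, f i : ℝ) : EReal) = ∑ i ∈ s, (f i : EReal) :=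
  map_sum (⟨⟨(↑), EReal.coe_zero⟩, EReal.coe_add⟩ : ℝ →+ EReal) f s

theorem HasSum.toEReal {ι : Type*} {f : ι → ℝ} {a : ℝ} (h : HasSum f a) :
    HasSum (fun i => (f i : EReal)) a :=
  h.map (⟨⟨(↑), EReal.coe_zero⟩, EReal.coe_add⟩ : ℝ →+ EReal) continuous_coe_real_ereal

section L2

variable {ι : Type*}

local notation "ℓ²(" ι ")" => lp (fun _ : ι => ℝ) 2

def l2Pi (I : ι → Set ℝ) : Set ℓ²(ι) := {u | ∀ k, u k ∈ I k}

variable {I : ι → Set ℝ}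

theorem isClosed_l2Pi (hcl : ∀ k, IsClosed (I k)) : IsClosed (l2Pi I) := by
  simp only [l2Pi, Set.ofPred_forall]
  exact isClosed_iInter fun k => (hcl k).preimage (lp.evalCLM ℝ _ 2 k).continuous

theorem convex_l2Pi (hconv : ∀ k, Convex ℝ (I k)) : Convex ℝ (l2Pi I) :=
  fun _ hu _ hv _ _ ha hb hab k => hconv k (hu k) (hv k) ha hb hab

theorem lp_sum_single_apply [DecidableEq ι] (s : Finset ι) (c : ι → ℝ) (j : ι) :
    (∑ k ∈ s, lp.single 2 k (c k) : ℓ²(ι)) j = if j ∈ s then c j else 0 := by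
  simp only [lp.coeFn_sum, lp.coeFn_single, Finset.sum_apply, Pi.single_apply, Finset.sum_ite_eq]

theorem inner_lp_sum_single [DecidableEq ι] (s : Finset ι) (c : ι → ℝ) (x : ℓ²(ι)) :
    ⟪(∑ k ∈ s, lp.single 2 k (c k) : ℓ²(ι)), x⟫ = ∑ k ∈ s, c k * x k := by
  simp [sum_inner, lp.inner_single_left, mul_comm]

theorem lp_sum_single_mem_l2Pi [DecidableEq ι] (h0 : ∀ k, 0 ∈ I k) {s : Finset ι} {c : ι → ℝ}
    (hc : ∀ k ∈ s, c k ∈ I k) : (∑ k ∈ s, lp.single 2 k (c k) : ℓ²(ι)) ∈ l2Pi I := by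
  intro j
  rw [lp_sum_single_apply]
  split_ifs with hj
  exacts [hc j hj, h0 j]

theorem supportFun_apply_le_supportFun_l2Pi (h0 : ∀ k, 0 ∈ I k) (x : ℓ²(ι)) (k : ι) :
    supportFun (I k) (x k) ≤ supportFun (l2Pi I) x := by
  classical
  refine supportFun_le fun a ha => ?_
  have := le_supportFun (lp_sum_single_mem_l2Pi h0 (s := {k}) (c := fun _ => a) (by simpa)) x
  simpa [lp.inner_single_left, mul_comm] using this

theorem sum_supportFun_apply_le_supportFun_l2Pi (hcl : ∀ k, IsClosed (I k))
    (h0 : ∀ k, 0 ∈ I k) (x : ℓ²(ι)) (s : Finset ι) :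
    ∑ k ∈ s, supportFun (I k) (x k) ≤ supportFun (l2Pi I) x := by
  classical
  by_cases htop : ∃ k ∈ s, supportFun (I k) (x k) = ⊤
  · obtain ⟨k, -, hk⟩ := htop
    exact le_top.trans (hk ▸ supportFun_apply_le_supportFun_l2Pi h0 x k)
  push Not at htop
  have hattain (k : ι) (hk : k ∈ s) :
      ∃ a ∈ I k, supportFun (I k) (x k) = ((a * x k : ℝ) : EReal) :=
    exists_supportFun_real_eq (hcl k) ⟨0, h0 k⟩ (htop k hk)
  choose! c hcI hc using hattain
  calc ∑ k ∈ s, supportFun (I k) (x k) = ((∑ k ∈ s, c k * x k : ℝ) : EReal) := by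
        rw [EReal.coe_finsetSum]
        exact Finset.sum_congr rfl hc
    _ = ((⟪(∑ k ∈ s, lp.single 2 k (c k) : ℓ²(ι)), x⟫ : ℝ) : EReal) := by
        rw [inner_lp_sum_single]
    _ ≤ _ := le_supportFun (lp_sum_single_mem_l2Pi h0 hcI) x

theorem tsum_supportFun_apply_eq_supportFun_l2Pi (hcl : ∀ k, IsClosed (I k))
    (h0 : ∀ k, 0 ∈ I k) (x : ℓ²(ι)) :
    ∑' k, supportFun (I k) (x k) = supportFun (l2Pi I) x := by
  have hsum : HasSum (fun k => supportFun (I k) (x k))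
      (⨆ s : Finset ι, ∑ k ∈ s, supportFun (I k) (x k)) :=
    hasSum_of_isLUB_of_nonneg _ (fun k => supportFun_nonneg (h0 k) _) isLUB_iSup
  rw [hsum.tsum_eq]
  refine le_antisymm (iSup_le (sum_supportFun_apply_le_supportFun_l2Pi hcl h0 x)) ?_
  refine supportFun_le fun u hu => hasSum_le (fun k => ?_) (lp.hasSum_inner u x).toEReal hsum
  simpa only [Real.inner_apply] using le_supportFun (hu k) (x k)

end L2

open Classical in
theorem stmt_11_general (ω : ℝ) (hω : 0 < ω) (I : ℕ → Set ℝ)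
    (hcl : ∀ k, IsClosed (I k)) (hconn : ∀ k, (I k).OrdConnected)
    (hsub : ∀ k, Set.Icc (-ω) ω ⊆ I k) :
    (∀ x : lp (fun _ : ℕ => ℝ) 2,
        (∑' k, ⨆ s ∈ I k, ((s * x k : ℝ) : EReal))
          = ⨆ u ∈ {u : lp (fun _ : ℕ => ℝ) 2 | ∀ k, u k ∈ I k}, ((⟪u, x⟫ : ℝ) : EReal))
    ∧ (∀ u : lp (fun _ : ℕ => ℝ) 2,
        (⨆ x : lp (fun _ : ℕ => ℝ) 2,
            (((⟪u, x⟫ : ℝ) : EReal) - ∑' k, ⨆ s ∈ I k, ((s * x k : ℝ) : EReal)))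
          = if ∀ k, u k ∈ I k then (0 : EReal) else ⊤) := by
  have h0 (k : ℕ) : (0 : ℝ) ∈ I k := hsub k ⟨by linarith, hω.le⟩
  have hg (x : lp (fun _ : ℕ => ℝ) 2) :
      ∑' k, ⨆ s ∈ I k, ((s * x k : ℝ) : EReal) = supportFun (l2Pi I) x := by
    simpa only [supportFun_real] using tsum_supportFun_apply_eq_supportFun_l2Pi hcl h0 x
  refine ⟨hg, fun u => ?_⟩
  simp only [hg]
  split_ifs with hu
  · exact iSup_inner_sub_supportFun_of_mem hu
  · exact iSup_inner_sub_supportFun_of_notMem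
      (convex_l2Pi fun k => convex_iff_ordConnected.2 (hconn k)) (isClosed_l2Pi hcl) hu

open Classical in
/-- Let `(I_k)` be proper closed intervals of `ℝ` with `[−ω, ω] ⊆ I_k` for all `k`, `ω > 0`,
and `g(x) = Σ_k σ_{I_k}(x_k)` on `ℓ²(ℕ)`.  Then `g` is the support function of
`B = {u ∈ ℓ²(ℕ) : u_k ∈ I_k ∀k}`, and equivalently the Fenchel conjugate `g*` is the
indicator function of `B`. -/
theorem stmt_11 (ω : ℝ) (hω : 0 < ω) (I : ℕ → Set ℝ)
    (hcl : ∀ k, IsClosed (I k)) (hconn : ∀ k, (I k).OrdConnected)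
    (hproper : ∀ k, I k ≠ Set.univ) (hsub : ∀ k, Set.Icc (-ω) ω ⊆ I k) :
    (∀ x : lp (fun _ : ℕ => ℝ) 2,
        (∑' k, ⨆ s ∈ I k, ((s * x k : ℝ) : EReal))
          = ⨆ u ∈ {u : lp (fun _ : ℕ => ℝ) 2 | ∀ k, u k ∈ I k}, ((⟪u, x⟫ : ℝ) : EReal))
    ∧ (∀ u : lp (fun _ : ℕ => ℝ) 2,
        (⨆ x : lp (fun _ : ℕ => ℝ) 2,
            (((⟪u, x⟫ : ℝ) : EReal) - ∑' k, ⨆ s ∈ I k, ((s * x k : ℝ) : EReal)))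
          = if ∀ k, u k ∈ I k then (0 : EReal) else ⊤) :=
  stmt_11_general ω hω I hcl hconn hsub
end

section
/- Under hypothesis (H) (f = g + h with h convex, differentiable, bounded below with L-Lipschitz gradient, and g(x) = Σ_k [ψ_k(x_k) + σ_{I_k}(x_k)] with each I_k a proper closed interval containing [−ω,ω], ψ_k convex lsc, ψ_k(0)=0, ψ_k'(0)=0): for every x ∈ dom ∂f, the support supp(x) = {k : x_k ≠ 0} is finite, with cardinality bounded by ω⁻² ‖x + x*‖² for any x* ∈ ∂g(x). -/
/-!
Each summand `ψ_k + σ_{I_k}` of `g` vanishes at `0`, and it dominates `ω |t|`: `σ_{I_k}(t) ≥ ω |t|`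
because `[-ω, ω] ⊆ I_k`, and `ψ_k ≥ 0` because a convex function with `ψ_k(0) = 0` and
`ψ_k'(0) = 0` is minimal at `0`. Testing the subgradient inequality for `x* ∈ ∂g(x)` at the point
obtained from `x` by zeroing its `k`-th coordinate isolates the `k`-th summand and gives
`ω |x_k| ≤ ψ_k(x_k) + σ_{I_k}(x_k) ≤ x_k x*_k`, hence `|x_k + x*_k| ≥ ω` whenever `x_k ≠ 0`.
As `x + x* ∈ ℓ²`, at most `ω⁻² ‖x + x*‖²` coordinates can be that large.
-/

open scoped RealInnerProductSpace ENNReal Topology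
open Filter Set

theorem EReal.coe_ennreal_tsum {ι : Type*} (a : ι → ℝ≥0∞) :
    ((∑' k, a k : ℝ≥0∞) : EReal) = ∑' k, (a k : EReal) :=
  (ENNReal.summable.hasSum.map
    (⟨⟨(↑), EReal.coe_ennreal_zero⟩, EReal.coe_ennreal_add⟩ : ℝ≥0∞ →+ EReal)
    continuous_coe_ennreal_ereal).tsum_eq.symm

theorem nonneg_of_convex_of_hasDerivAt_zero {ψ : ℝ → EReal}
    (hconv : ∀ s t a b : ℝ, 0 ≤ a → 0 ≤ b → a + b = 1 →
      ψ (a * s + b * t) ≤ (a : EReal) * ψ s + (b : EReal) * ψ t)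
    (hbot : ∀ t, ψ t ≠ ⊥) (h0 : ψ 0 = 0) {F : ℝ → ℝ} {ε : ℝ} (hε : 0 < ε)
    (hF : ∀ t : ℝ, |t| < ε → ψ t = (F t : EReal)) (hd : HasDerivAt F 0 0) (t : ℝ) :
    0 ≤ ψ t := by
  by_contra! hneg
  obtain ⟨r, hr⟩ : ∃ r : ℝ, ψ t = r :=
    ⟨(ψ t).toReal, (EReal.coe_toReal (hneg.trans EReal.zero_lt_top).ne (hbot t)).symm⟩
  have hr0 : r < 0 := by exact_mod_cast hr ▸ hneg
  have hF0 : F 0 = 0 := by exact_mod_cast ((hF 0 (by simpa using hε)).symm.trans h0)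
  have hG : HasDerivAt (fun a => F (a * t)) 0 0 := by
    have hd' : HasDerivAt F 0 (0 * t) := by rwa [zero_mul]
    exact (zero_mul (1 * t)) ▸ hd'.comp (0 : ℝ) ((hasDerivAt_id' 0).mul_const t)
  have hslope : Tendsto (slope (fun a => F (a * t)) 0) (𝓝[>] 0) (𝓝 0) :=
    (hasDerivWithinAt_iff_tendsto_slope' (lt_irrefl 0)).1 hG.hasDerivWithinAt
  have hsmall : ∀ᶠ a in 𝓝 (0 : ℝ), |a * t| < ε := by
    have : Tendsto (fun a : ℝ => |a * t|) (𝓝 0) (𝓝 0) := by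
      simpa using ((continuous_mul_const t).abs.tendsto 0)
    exact this.eventually (gt_mem_nhds hε)
  -- convexity on the segment `[0, t]` bounds the slope of `a ↦ F (a t)` by `ψ t < 0`
  have hev : ∀ᶠ a in 𝓝[>] (0 : ℝ), slope (fun a => F (a * t)) 0 a ≤ r := by
    filter_upwards [Ioc_mem_nhdsGT one_pos, nhdsWithin_le_nhds hsmall] with a ⟨ha0, ha1⟩ hat
    have hc := hconv t 0 a (1 - a) ha0.le (by linarith) (by ring)
    rw [h0, hr, mul_zero, add_zero, mul_zero, add_zero, ← EReal.coe_mul, hF _ hat,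
      EReal.coe_le_coe_iff] at hc
    rw [slope_def_field, zero_mul, hF0, sub_zero, sub_zero, div_le_iff₀ ha0]
    linarith
  linarith [le_of_tendsto hslope hev]

noncomputable def supportFn (I : Set ℝ) (t : ℝ) : EReal := ⨆ s ∈ I, ((s * t : ℝ) : EReal)

theorem supportFn_zero {I : Set ℝ} (hI : I.Nonempty) : supportFn I 0 = 0 := by
  simp [supportFn, biSup_const hI]

theorem mul_abs_le_supportFn {I : Set ℝ} {ω : ℝ} (hI : Icc (-ω) ω ⊆ I) (hω : 0 ≤ ω) (t : ℝ) :
    ((ω * |t| : ℝ) : EReal) ≤ supportFn I t := by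
  rcases le_total 0 t with ht | ht
  · refine le_iSup₂_of_le ω (hI ⟨by linarith, le_rfl⟩) ?_
    rw [abs_of_nonneg ht]
  · refine le_iSup₂_of_le (-ω) (hI ⟨le_rfl, by linarith⟩) ?_
    rw [abs_of_nonpos ht, mul_neg, neg_mul]

theorem le_abs_add_of_mul_abs_le_mul {ω t s : ℝ} (ht : t ≠ 0) (h : ω * |t| ≤ t * s) :
    ω ≤ |t + s| := by
  rcases ht.lt_or_gt with ht | ht
  · rw [abs_of_neg ht] at h
    have : s ≤ -ω := by nlinarith
    exact le_abs.2 (Or.inr (by linarith))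
  · rw [abs_of_pos ht] at h
    have : ω ≤ s := by nlinarith
    exact le_abs.2 (Or.inl (by linarith))

theorem lp.finite_and_ncard_mul_rpow_le {α : Type*} {E : α → Type*}
    [∀ i, NormedAddCommGroup (E i)] {p : ℝ≥0∞} (hp : 0 < p.toReal) (f : lp E p)
    {ω : ℝ} (hω : 0 < ω) {S : Set α} (hS : ∀ i ∈ S, ω ≤ ‖f i‖) :
    S.Finite ∧ S.ncard * ω ^ p.toReal ≤ ‖f‖ ^ p.toReal := by
  have hfinset : ∀ s : Finset α, ↑s ⊆ S → s.card * ω ^ p.toReal ≤ ‖f‖ ^ p.toReal := by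
    intro s hs
    calc s.card * ω ^ p.toReal = ∑ _i ∈ s, ω ^ p.toReal := by simp
      _ ≤ ∑ i ∈ s, ‖f i‖ ^ p.toReal := Finset.sum_le_sum fun i hi =>
          Real.rpow_le_rpow hω.le (hS i (hs hi)) hp.le
      _ ≤ ‖f‖ ^ p.toReal := lp.sum_rpow_le_norm_rpow hp f s
  have hωp : 0 < ω ^ p.toReal := Real.rpow_pos_of_pos hω _
  have hfin : S.Finite := by
    by_contra hinf
    obtain ⟨s, hs, hcard⟩ := Set.Infinite.exists_subset_card_eq hinf
      (⌊‖f‖ ^ p.toReal / ω ^ p.toReal⌋₊ + 1)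
    have := hfinset s hs
    rw [hcard, ← le_div_iff₀ hωp] at this
    push_cast at this
    linarith [Nat.lt_floor_add_one (‖f‖ ^ p.toReal / ω ^ p.toReal)]
  refine ⟨hfin, ?_⟩
  simpa [Set.ncard_eq_toFinset_card _ hfin] using hfinset hfin.toFinset (by simp)

theorem term_le_mul_of_subgradient_tsum {ι : Type*} {φ : ι → ℝ → ℝ≥0∞}
    (hφ0 : ∀ k, φ k 0 = 0) {x xs : lp (fun _ : ι => ℝ) 2}
    (hxs : ∀ y : lp (fun _ : ι => ℝ) 2,
      ((∑' k, φ k (x k) : ℝ≥0∞) : EReal) + ((⟪xs, y - x⟫ : ℝ) : EReal) ≤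
        ((∑' k, φ k (y k) : ℝ≥0∞) : EReal))
    (k : ι) : (φ k (x k) : EReal) ≤ ((x k * xs k : ℝ) : EReal) := by
  classical
  set y := x - lp.single 2 k (x k)
  have hy : ∀ j, y j = if j = k then 0 else x j := by
    intro j
    split_ifs with hj
    · subst hj; simp [y]
    · simp [y, hj]
  have hinner : ⟪xs, y - x⟫ = -(x k * xs k) := by
    simp [y, lp.inner_single_right]
  have hsplit : ∑' j, φ j (x j) = φ k (x k) + ∑' j, φ j (y j) := by
    rw [ENNReal.tsum_eq_add_tsum_ite k]
    congr 1
    refine tsum_congr fun j => ?_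
    split_ifs with hj <;> simp [hy, hj, hφ0]
  have hfin : ∑' j, φ j (x j) ≠ ⊤ := by
    intro htop
    simpa [htop, hφ0] using hxs 0
  rw [hsplit] at hfin
  obtain ⟨hk, hrest⟩ := ENNReal.add_ne_top.1 hfin
  have h := hxs y
  rw [hsplit, hinner, EReal.coe_ennreal_add, ← EReal.coe_ennreal_toReal hk,
    ← EReal.coe_ennreal_toReal hrest] at h
  rw [← EReal.coe_ennreal_toReal hk, EReal.coe_le_coe_iff]
  norm_cast at h
  linarith

theorem stmt_13_general (ω : ℝ) (hω : 0 < ω)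
    (I : ℕ → Set ℝ) (hIsub : ∀ k, Set.Icc (-ω) ω ⊆ I k)
    (ψ : ℕ → ℝ → EReal)
    (hψconv : ∀ k, ∀ s t a b : ℝ, 0 ≤ a → 0 ≤ b → a + b = 1 →
      ψ k (a * s + b * t) ≤ (a : EReal) * ψ k s + (b : EReal) * ψ k t)
    (hψbot : ∀ k t, ψ k t ≠ ⊥)
    (hψ0 : ∀ k, ψ k 0 = 0)
    (hψdiff : ∀ k, ∃ (F : ℝ → ℝ) (ε : ℝ), 0 < ε ∧
      (∀ t : ℝ, |t| < ε → ψ k t = (F t : EReal)) ∧ HasDerivAt F 0 0)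
    (g : lp (fun _ : ℕ => ℝ) 2 → EReal)
    (hg : ∀ x, g x = ∑' k, (ψ k (x k) + ⨆ s ∈ I k, ((s * x k : ℝ) : EReal)))
    (x : lp (fun _ : ℕ => ℝ) 2)
    (xs : lp (fun _ : ℕ => ℝ) 2)
    (hxs : ∀ y, g x + ((⟪xs, y - x⟫ : ℝ) : EReal) ≤ g y) :
    {k : ℕ | x k ≠ 0}.Finite
      ∧ ({k : ℕ | x k ≠ 0}.ncard : ℝ) ≤ ω⁻¹ ^ 2 * ‖x + xs‖ ^ 2 := by
  have hψ_nonneg : ∀ k t, 0 ≤ ψ k t := fun k => by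
    obtain ⟨F, ε, hε, hF, hd⟩ := hψdiff k
    exact nonneg_of_convex_of_hasDerivAt_zero (hψconv k) (hψbot k) (hψ0 k) hε hF hd
  have hlow : ∀ k t, ((ω * |t| : ℝ) : EReal) ≤ ψ k t + supportFn (I k) t := fun k t =>
    le_add_of_nonneg_of_le (hψ_nonneg k t) (mul_abs_le_supportFn (hIsub k) hω.le t)
  set φ : ℕ → ℝ → ℝ≥0∞ := fun k t => (ψ k t + supportFn (I k) t).toENNReal
  have hφ : ∀ k t, (φ k t : EReal) = ψ k t + supportFn (I k) t := fun k t =>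
    EReal.coe_toENNReal ((EReal.coe_nonneg.2 (by positivity)).trans (hlow k t))
  have hφ0 : ∀ k, φ k 0 = 0 := fun k => by
    simp [φ, hψ0, supportFn_zero ⟨0, hIsub k ⟨by linarith, by linarith⟩⟩]
  have hgφ : ∀ y, g y = ((∑' k, φ k (y k) : ℝ≥0∞) : EReal) := fun y => by
    simp only [hg, EReal.coe_ennreal_tsum, hφ]; rfl
  have hsupp : ∀ k ∈ {k : ℕ | x k ≠ 0}, ω ≤ ‖(x + xs) k‖ := fun k hk =>
    le_abs_add_of_mul_abs_le_mul hk <| EReal.coe_le_coe_iff.1 <| (hlow k (x k)).trans <|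
      (hφ k (x k)).symm.le.trans <|
      term_le_mul_of_subgradient_tsum hφ0 (by simpa only [hgφ] using hxs) k
  obtain ⟨hfin, hcard⟩ :=
    lp.finite_and_ncard_mul_rpow_le (p := 2) (by norm_num) (x + xs) hω hsupp
  refine ⟨hfin, ?_⟩
  simp only [ENNReal.toReal_ofNat, Real.rpow_two] at hcard
  rw [inv_pow, ← div_eq_inv_mul, le_div_iff₀ (by positivity)]
  exact hcard

/-- Hypothesis (H): `f = g + h` on `X = ℓ²(ℕ)`, with `h` convex, bounded below,
differentiable with `L`-Lipschitz gradient `h'`, and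
`g(x) = Σ_k [ψ_k(x_k) + σ_{I_k}(x_k)]`, each `I_k` a proper closed interval containing
`[−ω, ω]` (`ω > 0`), each `ψ_k` proper convex lsc with `ψ_k(0) = 0` and `ψ_k'(0) = 0`
(encoded: `ψ_k` agrees near `0` with a real function having derivative `0` at `0`).
Then every `x ∈ dom ∂f` has finite support, with cardinality at most `ω⁻² ‖x + x*‖²`
for any `x* ∈ ∂g(x)`. -/
theorem stmt_13 (ω L : ℝ) (hω : 0 < ω) (hL : 0 < L)
    (I : ℕ → Set ℝ) (hIcl : ∀ k, IsClosed (I k)) (hIconn : ∀ k, (I k).OrdConnected)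
    (hIproper : ∀ k, I k ≠ Set.univ) (hIsub : ∀ k, Set.Icc (-ω) ω ⊆ I k)
    (ψ : ℕ → ℝ → EReal)
    (hψconv : ∀ k, ∀ s t a b : ℝ, 0 ≤ a → 0 ≤ b → a + b = 1 →
      ψ k (a * s + b * t) ≤ (a : EReal) * ψ k s + (b : EReal) * ψ k t)
    (hψlsc : ∀ k, LowerSemicontinuous (ψ k))
    (hψbot : ∀ k t, ψ k t ≠ ⊥)
    (hψ0 : ∀ k, ψ k 0 = 0)
    (hψdiff : ∀ k, ∃ (F : ℝ → ℝ) (ε : ℝ), 0 < ε ∧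
      (∀ t : ℝ, |t| < ε → ψ k t = (F t : EReal)) ∧ HasDerivAt F 0 0)
    (h : lp (fun _ : ℕ => ℝ) 2 → ℝ) (h' : lp (fun _ : ℕ => ℝ) 2 → lp (fun _ : ℕ => ℝ) 2)
    (hhconv : ConvexOn ℝ Set.univ h) (hhbdd : BddBelow (Set.range h))
    (hhgrad : ∀ x, HasGradientAt h (h' x) x)
    (hhlip : LipschitzWith (Real.toNNReal L) h')
    (g f : lp (fun _ : ℕ => ℝ) 2 → EReal)
    (hg : ∀ x, g x = ∑' k, (ψ k (x k) + ⨆ s ∈ I k, ((s * x k : ℝ) : EReal)))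
    (hf : ∀ x, f x = g x + ((h x : ℝ) : EReal))
    (x : lp (fun _ : ℕ => ℝ) 2)
    (hxdom : ∃ u : lp (fun _ : ℕ => ℝ) 2, ∀ y,
      f x + ((⟪u, y - x⟫ : ℝ) : EReal) ≤ f y)
    (xs : lp (fun _ : ℕ => ℝ) 2)
    (hxs : ∀ y, g x + ((⟪xs, y - x⟫ : ℝ) : EReal) ≤ g y) :
    {k : ℕ | x k ≠ 0}.Finite
      ∧ ({k : ℕ | x k ≠ 0}.ncard : ℝ) ≤ ω⁻¹ ^ 2 * ‖x + xs‖ ^ 2 :=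
  stmt_13_general ω hω I hIsub ψ hψconv hψbot hψ0 hψdiff g hg x xs hxs
end

section
/- Under hypothesis (H), let x̄ ∈ argmin f. If 0 belongs to the quasi-relative interior of ∂f(x̄), then the extended support of x̄ equals its support: esupp(x̄) = supp(x̄). -/
/-!
Write `g = ∑ Φₖ` with `Φₖ = ψₖ + σ_{Iₖ} ≥ 0`. Minimality of `x̄` along each coordinate line,
together with the convexity of `Φⱼ` and the differentiability of `h`, gives
`-∇h(x̄)ⱼ ∈ ∂Φⱼ(x̄ⱼ)`; by the separable sum rule, replacing the `k`-th entry of `-∇h(x̄)` by any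
`c ∈ ∂Φₖ(x̄ₖ)` and adding `∇h(x̄)` yields a subgradient of `f` at `x̄`.

Suppose `x̄ₖ = 0` and `z = -∇h(x̄)ₖ ∈ bd Iₖ`, say `z = max Iₖ`. Then `σ_{Iₖ}(t) = z t` for `t ≥ 0`,
and since `ψₖ'(0) = 0` the right derivative of `t ↦ f(x̄ + t eₖ)` at `0` vanishes, so every
`u ∈ ∂f(x̄)` has `uₖ ≤ 0`. The closed cone generated by `∂f(x̄)` then lies in the half-space
`{uₖ ≤ 0}`; being a subspace, it lies in `{uₖ = 0}`. But every `c ∈ Iₖ` is a subgradient of `Φₖ`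
at `0`, so the subgradients `(c - z) eₖ` of `f`, `c ∈ [-ω, ω]`, would all have vanishing `k`-th
entry, which is absurd.
-/

open Filter Topology Set
open scoped RealInnerProductSpace

-- `EReal` is not an `ℝ`-module, so `ConvexOn` does not apply to extended-real-valued functions.
def ConvexEReal (φ : ℝ → EReal) : Prop :=
  ∀ s t a b : ℝ, 0 ≤ a → 0 ≤ b → a + b = 1 →
    φ (a * s + b * t) ≤ (a : EReal) * φ s + (b : EReal) * φ t

lemma ConvexEReal.add {φ χ : ℝ → EReal} (hφ : ConvexEReal φ) (hχ : ConvexEReal χ) :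
    ConvexEReal (φ + χ) := by
  intro s t a b ha hb hab
  calc φ (a * s + b * t) + χ (a * s + b * t)
      ≤ ((a : EReal) * φ s + (b : EReal) * φ t) + ((a : EReal) * χ s + (b : EReal) * χ t) :=
        add_le_add (hφ s t a b ha hb hab) (hχ s t a b ha hb hab)
    _ = (a : EReal) * (φ s + χ s) + (b : EReal) * (φ t + χ t) := by
        rw [EReal.left_distrib_of_nonneg_of_ne_top (by exact_mod_cast ha) (EReal.coe_ne_top a),
          EReal.left_distrib_of_nonneg_of_ne_top (by exact_mod_cast hb) (EReal.coe_ne_top b)]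
        abel

-- The chord inequality bounds the difference quotients of `P` at `0` by `φ (a + v) - φ a`.
lemma ConvexEReal.le_of_hasDerivAt {φ : ℝ → EReal} (hφ : ConvexEReal φ) {P : ℝ → ℝ} {c a v : ℝ}
    (hP : HasDerivAt P c 0) (ha : φ a = P 0)
    (hle : ∀ᶠ l in 𝓝[>] 0, (P l : EReal) ≤ φ (a + l * v)) :
    ((P 0 + c : ℝ) : EReal) ≤ φ (a + v) := by
  have hchord : ∀ᶠ l in 𝓝[>] (0 : ℝ),
      0 < l ∧ (P l : EReal) ≤ l * φ (a + v) + (1 - l : ℝ) * P 0 := by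
    filter_upwards [hle, Ioc_mem_nhdsGT one_pos] with l hl hl1
    refine ⟨hl1.1, hl.trans ?_⟩
    have := hφ (a + v) a l (1 - l) hl1.1.le (by linarith [hl1.2]) (by ring)
    rwa [show l * (a + v) + (1 - l) * a = a + l * v by ring, ha] at this
  induction hA : φ (a + v) using EReal.rec with
  | bot =>
    obtain ⟨l, hl0, hl⟩ := hchord.exists
    rw [hA, EReal.coe_mul_bot_of_pos hl0, EReal.bot_add] at hl
    exact absurd hl (not_le.2 (EReal.bot_lt_coe _))
  | coe A =>
    have hslope : Tendsto (slope P 0) (𝓝[>] 0) (𝓝 c) :=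
      (hasDerivAt_iff_tendsto_slope.1 hP).mono_left (nhdsWithin_mono _ fun l hl => ne_of_gt hl)
    refine EReal.coe_le_coe_iff.2 ?_
    suffices c ≤ A - P 0 by linarith
    refine le_of_tendsto hslope ?_
    filter_upwards [hchord] with l ⟨hl0, hl⟩
    rw [hA, ← EReal.coe_mul, ← EReal.coe_mul, ← EReal.coe_add, EReal.coe_le_coe_iff] at hl
    rw [slope_def_field, sub_zero, div_le_iff₀ hl0]
    linarith
  | top => exact le_top

def subdifferential {E : Type*} [NormedAddCommGroup E] [InnerProductSpace ℝ E]
    (f : E → EReal) (x : E) : Set E :=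
  {u | ∀ y, f x + ((⟪u, y - x⟫ : ℝ) : EReal) ≤ f y}

lemma mem_subdifferential_iff_real {φ : ℝ → EReal} {a u : ℝ} :
    u ∈ subdifferential φ a ↔ ∀ t, φ a + ((u * (t - a) : ℝ) : EReal) ≤ φ t := by
  simp only [subdifferential, Set.mem_ofPred_eq, Real.inner_apply]

lemma HasDerivAt.comp_add_mul {F : ℝ → ℝ} {a d : ℝ} (hF : HasDerivAt F d a) (v : ℝ) :
    HasDerivAt (fun l => F (a + l * v)) (d * v) 0 := by
  have hline : HasDerivAt (fun l : ℝ => a + l * v) v 0 := by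
    simpa using ((hasDerivAt_id (0 : ℝ)).mul_const v).const_add a
  exact (by simpa using hF : HasDerivAt F d (a + 0 * v)).comp 0 hline

lemma ConvexEReal.mem_subdifferential_of_hasDerivAt {φ : ℝ → EReal} (hφ : ConvexEReal φ)
    {F : ℝ → ℝ} {a d : ℝ} (hφF : ∀ᶠ t in 𝓝 a, φ t = F t) (hF : HasDerivAt F d a) :
    d ∈ subdifferential φ a := by
  refine mem_subdifferential_iff_real.2 fun t => ?_
  have hseg : Tendsto (fun l : ℝ => a + l * (t - a)) (𝓝[>] 0) (𝓝 a) := by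
    have : Continuous fun l : ℝ => a + l * (t - a) := by fun_prop
    simpa using (this.tendsto 0).mono_left nhdsWithin_le_nhds
  have h := hφ.le_of_hasDerivAt (hF.comp_add_mul (t - a)) (by simpa using hφF.self_of_nhds)
    ((hseg.eventually hφF).mono fun l hl => hl.ge)
  simpa [hφF.self_of_nhds] using h

lemma ConvexEReal.nonneg_of_hasDerivAt_zero {φ : ℝ → EReal} (hφ : ConvexEReal φ) (hφ0 : φ 0 = 0)
    {F : ℝ → ℝ} (hφF : ∀ᶠ t in 𝓝 0, φ t = F t) (hF : HasDerivAt F 0 0) (t : ℝ) : 0 ≤ φ t := by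
  simpa [hφ0] using mem_subdifferential_iff_real.1 (hφ.mem_subdifferential_of_hasDerivAt hφF hF) t

lemma ConvexEReal.neg_mem_subdifferential_of_forall_le {φ : ℝ → EReal} (hφ : ConvexEReal φ)
    {p : ℝ → ℝ} {a r d : ℝ} (ha : φ a = r) (hp : HasDerivAt p d 0)
    (hmin : ∀ s, φ a + p 0 ≤ φ (a + s) + p s) :
    -d ∈ subdifferential φ a := by
  refine mem_subdifferential_iff_real.2 fun t => ?_
  have hP : HasDerivAt (fun l => r + p 0 - p (0 + l * (t - a))) (-(d * (t - a))) 0 :=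
    (HasDerivAt.comp_add_mul (by simpa using hp) (t - a)).const_sub _
  have hle : ∀ l : ℝ, ((r + p 0 - p (0 + l * (t - a)) : ℝ) : EReal) ≤ φ (a + l * (t - a)) := by
    intro l
    rw [zero_add, EReal.coe_sub, EReal.sub_le_iff_le_add (.inl (EReal.coe_ne_bot _))
      (.inl (EReal.coe_ne_top _)), EReal.coe_add, ← ha]
    exact hmin _
  simpa [ha, sub_eq_add_neg] using
    hφ.le_of_hasDerivAt hP (by simpa using ha) (Eventually.of_forall hle)

noncomputable def supportFunction (I : Set ℝ) (t : ℝ) : EReal := ⨆ s ∈ I, ((s * t : ℝ) : EReal)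

section supportFunction

variable {I : Set ℝ} {c t z : ℝ}

lemma le_supportFunction (hc : c ∈ I) : ((c * t : ℝ) : EReal) ≤ supportFunction I t :=
  le_iSup₂ (f := fun s (_ : s ∈ I) => ((s * t : ℝ) : EReal)) c hc

lemma supportFunction_nonneg (h0 : (0 : ℝ) ∈ I) (t : ℝ) : 0 ≤ supportFunction I t := by
  simpa using le_supportFunction (t := t) h0

lemma supportFunction_zero (hI : I.Nonempty) : supportFunction I 0 = 0 := by
  simp [supportFunction, biSup_const hI]

lemma supportFunction_eq_of_isGreatest (hz : IsGreatest I z) (ht : 0 ≤ t) :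
    supportFunction I t = ((z * t : ℝ) : EReal) :=
  le_antisymm
    (iSup₂_le fun _ hs => EReal.coe_le_coe_iff.2 (mul_le_mul_of_nonneg_right (hz.2 hs) ht))
    (le_supportFunction hz.1)

lemma supportFunction_eq_of_isLeast (hz : IsLeast I z) (ht : t ≤ 0) :
    supportFunction I t = ((z * t : ℝ) : EReal) :=
  le_antisymm
    (iSup₂_le fun _ hs => EReal.coe_le_coe_iff.2 (mul_le_mul_of_nonpos_right (hz.2 hs) ht))
    (le_supportFunction hz.1)

lemma convexEReal_supportFunction (I : Set ℝ) : ConvexEReal (supportFunction I) := by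
  intro s t a b ha hb _
  refine iSup₂_le fun c hc => ?_
  calc ((c * (a * s + b * t) : ℝ) : EReal)
      = (a : EReal) * ((c * s : ℝ) : EReal) + (b : EReal) * ((c * t : ℝ) : EReal) := by
        rw [← EReal.coe_mul, ← EReal.coe_mul, ← EReal.coe_add]
        ring_nf
    _ ≤ (a : EReal) * supportFunction I s + (b : EReal) * supportFunction I t :=
        add_le_add (mul_le_mul_of_nonneg_left (le_supportFunction hc) (by exact_mod_cast ha))
          (mul_le_mul_of_nonneg_left (le_supportFunction hc) (by exact_mod_cast hb))

end supportFunction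

lemma mem_subdifferential_add_supportFunction_zero {ψ : ℝ → EReal} {I : Set ℝ} {c : ℝ}
    (hψ : ∀ t, 0 ≤ ψ t) (hψ0 : ψ 0 = 0) (hc : c ∈ I) :
    c ∈ subdifferential (fun t => ψ t + supportFunction I t) 0 := by
  refine mem_subdifferential_iff_real.2 fun t => ?_
  simpa [hψ0, supportFunction_zero ⟨c, hc⟩] using add_le_add (hψ t) (le_supportFunction (t := t) hc)

lemma IsClosed.isGreatest_or_isLeast_of_mem_frontier {I : Set ℝ} {z : ℝ} (hcl : IsClosed I)
    (hI : I.OrdConnected) (hz : z ∈ frontier I) : IsGreatest I z ∨ IsLeast I z := by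
  rw [hcl.frontier_eq] at hz
  obtain ⟨hzI, hint⟩ := hz
  refine or_iff_not_imp_left.2 fun hng => ⟨hzI, fun q hq => ?_⟩
  by_contra! hqz
  obtain ⟨p, hp, hzp⟩ : ∃ p ∈ I, z < p := by
    by_contra! h
    exact hng ⟨hzI, h⟩
  exact hint (mem_interior_iff_mem_nhds.2 (mem_of_superset (Ioo_mem_nhds hqz hzp)
    (Ioo_subset_Icc_self.trans (hI.out hq hp))))

namespace EReal

variable {ι : Type*}

lemma hasSum_coe {f : ι → ℝ} {a : ℝ} : HasSum (fun i => (f i : EReal)) a ↔ HasSum f a := by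
  have hsum : ∀ s : Finset ι, ((∑ i ∈ s, f i : ℝ) : EReal) = ∑ i ∈ s, (f i : EReal) :=
    map_sum (⟨⟨(↑), EReal.coe_zero⟩, EReal.coe_add⟩ : ℝ →+ EReal) f
  simp only [HasSum, ← hsum, EReal.tendsto_coe]

lemma summable_of_nonneg {f : ι → EReal} (hf : ∀ i, 0 ≤ f i) : Summable f :=
  ⟨_, hasSum_of_isLUB_of_nonneg _ hf isLUB_iSup⟩

lemma exists_hasSum_coe_of_tsum_eq_coe {f : ι → EReal} (hf : ∀ i, 0 ≤ f i) {G : ℝ}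
    (h : ∑' i, f i = G) : ∃ a : ι → ℝ, (∀ i, f i = a i) ∧ HasSum a G := by
  have hG : HasSum f G := h ▸ (summable_of_nonneg hf).hasSum
  have hfin : ∀ i, f i = ((f i).toReal : EReal) := fun i =>
    (coe_toReal (ne_top_of_le_ne_top (coe_ne_top G) (le_hasSum hG i fun j _ => hf j))
      (ne_bot_of_le_ne_bot zero_ne_bot (hf i))).symm
  exact ⟨_, hfin, hasSum_coe.1 (by rwa [funext hfin] at hG)⟩

end EReal

lemma HasDerivAt.ge_of_eventually_mul_le_nhdsGT {Q : ℝ → ℝ} {d u : ℝ} (hQ : HasDerivAt Q d 0)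
    (h0 : Q 0 = 0) (hle : ∀ᶠ s in 𝓝[>] 0, s * u ≤ Q s) : u ≤ d := by
  have hslope : Tendsto (slope Q 0) (𝓝[>] 0) (𝓝 d) :=
    (hasDerivAt_iff_tendsto_slope.1 hQ).mono_left (nhdsWithin_mono _ fun _ hs => ne_of_gt hs)
  refine ge_of_tendsto hslope ?_
  filter_upwards [hle, self_mem_nhdsWithin] with s hs hs0
  rw [slope_def_field, h0, sub_zero, sub_zero, le_div_iff₀ hs0]
  linarith

lemma HasDerivAt.le_of_eventually_mul_le_nhdsLT {Q : ℝ → ℝ} {d u : ℝ} (hQ : HasDerivAt Q d 0)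
    (h0 : Q 0 = 0) (hle : ∀ᶠ s in 𝓝[<] 0, s * u ≤ Q s) : d ≤ u := by
  have hslope : Tendsto (slope Q 0) (𝓝[<] 0) (𝓝 d) :=
    (hasDerivAt_iff_tendsto_slope.1 hQ).mono_left (nhdsWithin_mono _ fun _ hs => ne_of_lt hs)
  refine le_of_tendsto hslope ?_
  filter_upwards [hle, self_mem_nhdsWithin] with s hs hs0
  rw [slope_def_field, h0, sub_zero, sub_zero, div_le_iff_of_neg hs0]
  linarith

lemma map_eq_zero_of_closure_cone_eq_submodule {E : Type*} [AddCommGroup E] [Module ℝ E]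
    [TopologicalSpace E] {D : Set E} {S : Submodule ℝ E}
    (hS : closure {z | ∃ t : ℝ, 0 ≤ t ∧ ∃ u ∈ D, z = t • u} = S) {ℓ : E →L[ℝ] ℝ}
    (hD : (∀ u ∈ D, ℓ u ≤ 0) ∨ (∀ u ∈ D, 0 ≤ ℓ u)) {u : E} (hu : u ∈ D) : ℓ u = 0 := by
  wlog hle : ∀ u ∈ D, ℓ u ≤ 0 generalizing ℓ
  · have hge := hD.resolve_left hle
    simpa using this (ℓ := -ℓ) (.inl fun v hv => by simpa using hge v hv) fun v hv => by
      simpa using hge v hv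
  have hSle : (S : Set E) ⊆ {x | ℓ x ≤ 0} := by
    rw [← hS]
    refine closure_minimal ?_ (isClosed_le ℓ.continuous continuous_const)
    rintro _ ⟨t, ht, v, hv, rfl⟩
    simpa using mul_nonpos_of_nonneg_of_nonpos ht (hle v hv)
  have huS : u ∈ S := by
    rw [← SetLike.mem_coe, ← hS]
    exact subset_closure ⟨1, zero_le_one, u, hu, (one_smul _ _).symm⟩
  have hneg : ℓ (-u) ≤ 0 := hSle (S.neg_mem huS)
  rw [map_neg] at hneg
  linarith [show ℓ u ≤ 0 from hSle huS]

local notation "ℓ²(" ι ")" => lp (fun _ : ι => ℝ) 2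

lemma ConvexOn.add_inner_le_of_hasGradientAt {E : Type*} [NormedAddCommGroup E]
    [InnerProductSpace ℝ E] [CompleteSpace E] {h : E → ℝ} {d x : E} (hh : ConvexOn ℝ univ h)
    (hd : HasGradientAt h d x) (y : E) : h x + ⟪d, y - x⟫ ≤ h y := by
  have hline : ConvexOn ℝ univ (h ∘ AffineMap.lineMap (k := ℝ) x y) := by
    simpa using hh.comp_affineMap (AffineMap.lineMap (k := ℝ) x y)
  have hderiv : HasDerivAt (h ∘ AffineMap.lineMap (k := ℝ) x y) ⟪d, y - x⟫ 0 :=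
    (by simpa using hd.hasFDerivAt :
      HasFDerivAt h _ (AffineMap.lineMap x y (0 : ℝ))).comp_hasDerivAt
      0 AffineMap.hasDerivAt_lineMap
  have := hline.le_slope_of_hasDerivAt (mem_univ 0) (mem_univ 1) zero_lt_one hderiv
  simp only [slope_def_field, Function.comp_apply, AffineMap.lineMap_apply_one,
    AffineMap.lineMap_apply_zero, sub_zero, div_one] at this
  linarith

lemma HasGradientAt.hasDerivAt_add_single {ι : Type*} [DecidableEq ι] {h : ℓ²(ι) → ℝ}
    {d x : ℓ²(ι)} (hd : HasGradientAt h d x) (k : ι) :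
    HasDerivAt (fun s => h (x + lp.single 2 k s)) (d k) 0 := by
  have hpath : HasDerivAt (fun s : ℝ => x + lp.single 2 k s) (lp.single 2 k 1) 0 := by
    have := ((hasDerivAt_id (0 : ℝ)).smul_const (lp.single 2 k (1 : ℝ))).const_add x
    simpa [← lp.single_smul] using this
  have := (by simpa using hd.hasFDerivAt :
    HasFDerivAt h _ (x + lp.single 2 k (0 : ℝ))).comp_hasDerivAt 0 hpath
  simp only [InnerProductSpace.toDual_apply_apply, lp.inner_single_right, Real.inner_apply,
    mul_one] at this
  exact this

noncomputable def separableSum {ι : Type*} (Φ : ι → ℝ → EReal) (x : ℓ²(ι)) : EReal :=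
  ∑' j, Φ j (x j)

section separableSum

variable {ι : Type*} {Φ : ι → ℝ → EReal} {x : ℓ²(ι)} {G : ℝ}

lemma exists_separableSum_eq_coe (hΦ : ∀ j t, 0 ≤ Φ j t) (hΦ0 : ∀ j, Φ j 0 = 0) {h : ℓ²(ι) → ℝ}
    (hmin : ∀ y, separableSum Φ x + h x ≤ separableSum Φ y + h y) :
    ∃ G : ℝ, separableSum Φ x = G := by
  have hle : separableSum Φ x + h x ≤ ((h 0 : ℝ) : EReal) := by
    simpa [separableSum, hΦ0] using hmin 0
  have hne_top : separableSum Φ x ≠ ⊤ := by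
    rintro htop
    simp [htop] at hle
  have hne_bot : separableSum Φ x ≠ ⊥ :=
    ne_bot_of_le_ne_bot EReal.zero_ne_bot (tsum_nonneg fun j => hΦ j (x j))
  exact ⟨_, (EReal.coe_toReal hne_top hne_bot).symm⟩

lemma coe_add_inner_le_separableSum (hΦ : ∀ j t, 0 ≤ Φ j t) (hx : separableSum Φ x = G)
    {v : ℓ²(ι)} (hv : ∀ j, v j ∈ subdifferential (Φ j) (x j)) (y : ℓ²(ι)) :
    ((G + ⟪v, y - x⟫ : ℝ) : EReal) ≤ separableSum Φ y := by
  obtain ⟨a, ha, hsum⟩ := EReal.exists_hasSum_coe_of_tsum_eq_coe (fun j => hΦ j (x j)) hx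
  have hinner : HasSum (fun j => v j * (y j - x j)) ⟪v, y - x⟫ := by
    simpa [mul_comm] using lp.hasSum_inner (𝕜 := ℝ) v (y - x)
  refine hasSum_le (fun j => ?_) (EReal.hasSum_coe.2 (hsum.add hinner))
    (EReal.summable_of_nonneg fun j => hΦ j (y j)).hasSum
  simpa [ha j] using mem_subdifferential_iff_real.1 (hv j) (y j)

lemma separableSum_add_single_add_le [DecidableEq ι] (hΦ : ∀ j t, 0 ≤ Φ j t)
    (hx : separableSum Φ x = G) (k : ι) (s : ℝ) :
    separableSum Φ (x + lp.single 2 k s) + Φ k (x k) ≤ G + Φ k (x k + s) := by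
  obtain ⟨a, ha, hsum⟩ := EReal.exists_hasSum_coe_of_tsum_eq_coe (fun j => hΦ j (x j)) hx
  induction hb : Φ k (x k + s) using EReal.rec with
  | bot => exact absurd hb (ne_bot_of_le_ne_bot EReal.zero_ne_bot (hΦ k _))
  | top => simp
  | coe b =>
    have hterms : (fun j => Φ j ((x + lp.single 2 k s : ℓ²(ι)) j)) =
        fun j => (Function.update a k b j : EReal) := by
      funext j
      by_cases hjk : j = k
      · subst hjk
        simp [hb]
      · simp [ha j, hjk]
    have hy : separableSum Φ (x + lp.single 2 k s) = ((b - a k + G : ℝ) : EReal) := by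
      rw [separableSum, hterms]
      exact (EReal.hasSum_coe.2 (hsum.update k b)).tsum_eq
    rw [hy, ha k, ← EReal.coe_add, ← EReal.coe_add]
    exact EReal.coe_le_coe_iff.2 (by linarith)

variable {h : ℓ²(ι) → ℝ} {d : ℓ²(ι)}

lemma add_mem_subdifferential_separableSum_add (hΦ : ∀ j t, 0 ≤ Φ j t)
    (hx : separableSum Φ x = G) (hh : ConvexOn ℝ univ h) (hd : HasGradientAt h d x) {v : ℓ²(ι)}
    (hv : ∀ j, v j ∈ subdifferential (Φ j) (x j)) :
    v + d ∈ subdifferential (fun y => separableSum Φ y + (h y : EReal)) x := by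
  intro y
  dsimp only
  rw [hx, ← EReal.coe_add, ← EReal.coe_add, inner_add_left,
    show G + h x + (⟪v, y - x⟫ + ⟪d, y - x⟫) = (G + ⟪v, y - x⟫) + (h x + ⟪d, y - x⟫) by ring,
    EReal.coe_add]
  exact add_le_add (coe_add_inner_le_separableSum hΦ hx hv y)
    (EReal.coe_le_coe_iff.2 (hh.add_inner_le_of_hasGradientAt hd y))

variable [DecidableEq ι]

lemma neg_gradient_mem_subdifferential (hΦ0 : ∀ j t, 0 ≤ Φ j t) (hΦ : ∀ j, ConvexEReal (Φ j))
    (hx : separableSum Φ x = G) (hd : HasGradientAt h d x)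
    (hmin : ∀ y, separableSum Φ x + h x ≤ separableSum Φ y + h y) (j : ι) :
    -d j ∈ subdifferential (Φ j) (x j) := by
  obtain ⟨a, ha, -⟩ := EReal.exists_hasSum_coe_of_tsum_eq_coe (fun j => hΦ0 j (x j)) hx
  refine (hΦ j).neg_mem_subdifferential_of_forall_le (ha j) (hd.hasDerivAt_add_single j)
    fun s => ?_
  rw [← (EReal.addLECancellable_coe G).add_le_add_iff_left]
  calc (G : EReal) + (Φ j (x j) + h (x + lp.single 2 j 0))
      = (G + h x) + Φ j (x j) := by
        rw [lp.single_zero, add_zero]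
        ac_rfl
    _ ≤ (separableSum Φ (x + lp.single 2 j s) + h (x + lp.single 2 j s)) + Φ j (x j) := by
      rw [← hx]
      exact add_le_add_left (hmin _) _
    _ = (separableSum Φ (x + lp.single 2 j s) + Φ j (x j)) + h (x + lp.single 2 j s) := by
      rw [add_right_comm]
    _ ≤ (G + Φ j (x j + s)) + h (x + lp.single 2 j s) :=
      add_le_add_left (separableSum_add_single_add_le hΦ0 hx j s) _
    _ = G + (Φ j (x j + s) + h (x + lp.single 2 j s)) := add_assoc _ _ _

lemma single_add_mem_subdifferential (hΦ0 : ∀ j t, 0 ≤ Φ j t) (hΦ : ∀ j, ConvexEReal (Φ j))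
    (hx : separableSum Φ x = G) (hh : ConvexOn ℝ univ h) (hd : HasGradientAt h d x)
    (hmin : ∀ y, separableSum Φ x + h x ≤ separableSum Φ y + h y) {k : ι} {c : ℝ}
    (hc : c ∈ subdifferential (Φ k) (x k)) :
    lp.single 2 k (c + d k) ∈ subdifferential (fun y => separableSum Φ y + (h y : EReal)) x := by
  have hv : ∀ j, (lp.single 2 k (c + d k) - d : ℓ²(ι)) j ∈ subdifferential (Φ j) (x j) := by
    intro j
    by_cases hjk : j = k
    · subst hjk
      simpa using hc
    · simpa [hjk] using neg_gradient_mem_subdifferential hΦ0 hΦ hx hd hmin j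
  simpa using add_mem_subdifferential_separableSum_add hΦ0 hx hh hd hv

lemma mul_apply_le_of_mem_subdifferential (hΦ : ∀ j t, 0 ≤ Φ j t) (hx : separableSum Φ x = G)
    {k : ι} (hk : Φ k (x k) = 0) {u : ℓ²(ι)}
    (hu : u ∈ subdifferential (fun y => separableSum Φ y + (h y : EReal)) x) {s R : ℝ}
    (hR : Φ k (x k + s) = R) : s * u k ≤ R + (h (x + lp.single 2 k s) - h x) := by
  have hsum := separableSum_add_single_add_le hΦ hx k s
  rw [hk, add_zero, hR] at hsum
  have hle : ((G + h x + s * u k : ℝ) : EReal) ≤ ((G + R + h (x + lp.single 2 k s) : ℝ) : EReal) :=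
    calc ((G + h x + s * u k : ℝ) : EReal)
        = separableSum Φ x + h x + ((⟪u, x + lp.single 2 k s - x⟫ : ℝ) : EReal) := by
          simp [hx, lp.inner_single_right]
      _ ≤ separableSum Φ (x + lp.single 2 k s) + h (x + lp.single 2 k s) := hu _
      _ ≤ ((G + R + h (x + lp.single 2 k s) : ℝ) : EReal) := by
          rw [EReal.coe_add]
          exact add_le_add_left hsum _
  linarith [EReal.coe_le_coe_iff.1 hle]

lemma apply_nonpos_of_mem_subdifferential (hΦ : ∀ j t, 0 ≤ Φ j t) (hx : separableSum Φ x = G)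
    (hd : HasGradientAt h d x) {k : ι} (hk : Φ k (x k) = 0) {R : ℝ → ℝ}
    (hR : HasDerivAt R (-d k) 0) (hR0 : R 0 = 0) (hΦR : ∀ᶠ s in 𝓝[>] 0, Φ k (x k + s) = R s)
    {u : ℓ²(ι)} (hu : u ∈ subdifferential (fun y => separableSum Φ y + (h y : EReal)) x) :
    u k ≤ 0 := by
  have hQ := hR.add ((hd.hasDerivAt_add_single k).sub_const (h x))
  rw [neg_add_cancel] at hQ
  exact hQ.ge_of_eventually_mul_le_nhdsGT (by simp [hR0])
    (hΦR.mono fun s hs => mul_apply_le_of_mem_subdifferential hΦ hx hk hu hs)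

lemma apply_nonneg_of_mem_subdifferential (hΦ : ∀ j t, 0 ≤ Φ j t) (hx : separableSum Φ x = G)
    (hd : HasGradientAt h d x) {k : ι} (hk : Φ k (x k) = 0) {R : ℝ → ℝ}
    (hR : HasDerivAt R (-d k) 0) (hR0 : R 0 = 0) (hΦR : ∀ᶠ s in 𝓝[<] 0, Φ k (x k + s) = R s)
    {u : ℓ²(ι)} (hu : u ∈ subdifferential (fun y => separableSum Φ y + (h y : EReal)) x) :
    0 ≤ u k := by
  have hQ := hR.add ((hd.hasDerivAt_add_single k).sub_const (h x))
  rw [neg_add_cancel] at hQ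
  exact hQ.le_of_eventually_mul_le_nhdsLT (by simp [hR0])
    (hΦR.mono fun s hs => mul_apply_le_of_mem_subdifferential hΦ hx hk hu hs)

lemma apply_nonpos_or_nonneg_of_mem_frontier (hΦ : ∀ j t, 0 ≤ Φ j t)
    (hx : separableSum Φ x = G) (hd : HasGradientAt h d x) {k : ι} (hxk : x k = 0)
    {ψ : ℝ → EReal} {I : Set ℝ} (hΦk : Φ k = fun t => ψ t + supportFunction I t) (hψ0 : ψ 0 = 0)
    {F : ℝ → ℝ} (hψF : ∀ᶠ t in 𝓝 0, ψ t = F t) (hF : HasDerivAt F 0 0) (hcl : IsClosed I)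
    (hI : I.OrdConnected) (hfr : -d k ∈ frontier I) :
    (∀ u ∈ subdifferential (fun y => separableSum Φ y + (h y : EReal)) x, u k ≤ 0) ∨
      (∀ u ∈ subdifferential (fun y => separableSum Φ y + (h y : EReal)) x, 0 ≤ u k) := by
  have hk : Φ k (x k) = 0 := by
    simp [hΦk, hxk, hψ0, supportFunction_zero ⟨_, hcl.frontier_subset hfr⟩]
  have hR : HasDerivAt (fun s => F s + -d k * s) (0 + -d k * 1) 0 :=
    hF.add ((hasDerivAt_id 0).const_mul _)
  rw [zero_add, mul_one] at hR
  have hR0 : F 0 + -d k * 0 = 0 := by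
    have hF0 := hψF.self_of_nhds
    rw [hψ0] at hF0
    simp [← EReal.coe_eq_zero, ← hF0]
  have hΦR : ∀ s, ψ s = F s → supportFunction I s = ((-d k * s : ℝ) : EReal) →
      Φ k (x k + s) = ((F s + -d k * s : ℝ) : EReal) := by
    intro s hs hσ
    simp [hΦk, hxk, hs, hσ]
  rcases hcl.isGreatest_or_isLeast_of_mem_frontier hI hfr with hz | hz
  · refine .inl fun u hu => apply_nonpos_of_mem_subdifferential hΦ hx hd hk hR hR0 ?_ hu
    filter_upwards [nhdsWithin_le_nhds hψF, self_mem_nhdsWithin] with s hs hs0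
    exact hΦR s hs (supportFunction_eq_of_isGreatest hz (le_of_lt hs0))
  · refine .inr fun u hu => apply_nonneg_of_mem_subdifferential hΦ hx hd hk hR hR0 ?_ hu
    filter_upwards [nhdsWithin_le_nhds hψF, self_mem_nhdsWithin] with s hs hs0
    exact hΦR s hs (supportFunction_eq_of_isLeast hz (le_of_lt hs0))

end separableSum

theorem stmt_15_general (ω : ℝ) (hω : 0 < ω)
    (I : ℕ → Set ℝ) (hIcl : ∀ k, IsClosed (I k)) (hIconn : ∀ k, (I k).OrdConnected)
    (hIsub : ∀ k, Set.Icc (-ω) ω ⊆ I k)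
    (ψ : ℕ → ℝ → EReal)
    (hψconv : ∀ k, ∀ s t a b : ℝ, 0 ≤ a → 0 ≤ b → a + b = 1 →
      ψ k (a * s + b * t) ≤ (a : EReal) * ψ k s + (b : EReal) * ψ k t)
    (hψ0 : ∀ k, ψ k 0 = 0)
    (hψdiff : ∀ k, ∃ (F : ℝ → ℝ) (ε : ℝ), 0 < ε ∧
      (∀ t : ℝ, |t| < ε → ψ k t = (F t : EReal)) ∧ HasDerivAt F 0 0)
    (h : lp (fun _ : ℕ => ℝ) 2 → ℝ) (h' : lp (fun _ : ℕ => ℝ) 2 → lp (fun _ : ℕ => ℝ) 2)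
    (hhconv : ConvexOn ℝ Set.univ h)
    (hhgrad : ∀ x, HasGradientAt h (h' x) x)
    (g f : lp (fun _ : ℕ => ℝ) 2 → EReal)
    (hg : ∀ x, g x = ∑' k, (ψ k (x k) + ⨆ s ∈ I k, ((s * x k : ℝ) : EReal)))
    (hf : ∀ x, f x = g x + ((h x : ℝ) : EReal))
    (xbar : lp (fun _ : ℕ => ℝ) 2)
    (hmin : ∀ y, f xbar ≤ f y)
    (hqri : (∀ y, f xbar + ((⟪(0 : lp (fun _ : ℕ => ℝ) 2), y - xbar⟫ : ℝ) : EReal) ≤ f y)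
      ∧ ∃ S : Submodule ℝ (lp (fun _ : ℕ => ℝ) 2),
        closure {z : lp (fun _ : ℕ => ℝ) 2 | ∃ t : ℝ, 0 ≤ t ∧
            ∃ u : lp (fun _ : ℕ => ℝ) 2,
              (∀ y, f xbar + ((⟪u, y - xbar⟫ : ℝ) : EReal) ≤ f y) ∧ z = t • u}
          = (S : Set (lp (fun _ : ℕ => ℝ) 2))) :
    {k : ℕ | xbar k ≠ 0} ∪ {k : ℕ | -(h' xbar k) ∈ frontier (I k)}
      = {k : ℕ | xbar k ≠ 0} := by
  refine Set.union_eq_left.2 fun k (hk : -(h' xbar k) ∈ frontier (I k)) => ?_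
  by_contra hk0
  rw [Set.mem_ofPred_eq, not_not] at hk0
  set Φ : ℕ → ℝ → EReal := fun j t => ψ j t + supportFunction (I j) t
  obtain rfl : f = fun x => separableSum Φ x + (h x : EReal) := funext fun x => by rw [hf, hg]; rfl
  have h0I : ∀ j, (0 : ℝ) ∈ I j := fun j => hIsub j ⟨by linarith, by linarith⟩
  choose F ε hε hψF hF using hψdiff
  have hψF' : ∀ j, ∀ᶠ t in 𝓝 0, ψ j t = F j t := fun j =>
    Metric.eventually_nhds_iff.2 ⟨ε j, hε j, fun t ht => hψF j t (by simpa using ht)⟩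
  have hψnn : ∀ j t, 0 ≤ ψ j t := fun j =>
    ConvexEReal.nonneg_of_hasDerivAt_zero (hψconv j) (hψ0 j) (hψF' j) (hF j)
  have hΦnn : ∀ j t, 0 ≤ Φ j t := fun j t =>
    add_nonneg (hψnn j t) (supportFunction_nonneg (h0I j) t)
  have hΦconv : ∀ j, ConvexEReal (Φ j) := fun j =>
    ConvexEReal.add (hψconv j) (convexEReal_supportFunction (I j))
  obtain ⟨G, hG⟩ := exists_separableSum_eq_coe hΦnn
    (fun j => by simp [Φ, hψ0, supportFunction_zero ⟨0, h0I j⟩]) hmin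
  have hmem : ∀ c ∈ I k, lp.single 2 k (c + h' xbar k) ∈
      subdifferential (fun x => separableSum Φ x + (h x : EReal)) xbar := fun c hc =>
    single_add_mem_subdifferential hΦnn hΦconv hG hhconv (hhgrad xbar) hmin
      (hk0 ▸ mem_subdifferential_add_supportFunction_zero (hψnn k) (hψ0 k) hc)
  have hsign := apply_nonpos_or_nonneg_of_mem_frontier hΦnn hG (hhgrad xbar) hk0 rfl (hψ0 k)
    (hψF' k) (hF k) (hIcl k) (hIconn k) hk
  obtain ⟨S, hS⟩ := hqri.2
  have hzero : ∀ c ∈ I k, c + h' xbar k = 0 := fun c hc => by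
    simpa [lp.evalCLM] using map_eq_zero_of_closure_cone_eq_submodule hS
      (ℓ := lp.evalCLM ℝ (fun _ : ℕ => ℝ) 2 k) hsign (hmem c hc)
  linarith [hzero ω (hIsub k ⟨by linarith, le_rfl⟩), hzero (-ω) (hIsub k ⟨le_rfl, by linarith⟩)]

/-- Hypothesis (H): `f = g + h` on `X = ℓ²(ℕ)`, with `h` convex, bounded below,
differentiable with `L`-Lipschitz gradient `h'`, and
`g(x) = Σ_k [ψ_k(x_k) + σ_{I_k}(x_k)]`, each `I_k` a proper closed interval containing
`[−ω, ω]` (`ω > 0`), each `ψ_k` proper convex lsc with `ψ_k(0) = 0` and `ψ_k'(0) = 0`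
(encoded: `ψ_k` agrees near `0` with a real function having derivative `0` at `0`).
Let `x̄ ∈ argmin f`.  If `0` belongs to the quasi-relative interior of `∂f(x̄)`
(i.e. `0 ∈ ∂f(x̄)` and the closure of the cone generated by `∂f(x̄) − 0` is a closed
linear subspace), then `esupp(x̄) = supp(x̄)`. -/
theorem stmt_15 (ω L : ℝ) (hω : 0 < ω) (hL : 0 < L)
    (I : ℕ → Set ℝ) (hIcl : ∀ k, IsClosed (I k)) (hIconn : ∀ k, (I k).OrdConnected)
    (hIproper : ∀ k, I k ≠ Set.univ) (hIsub : ∀ k, Set.Icc (-ω) ω ⊆ I k)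
    (ψ : ℕ → ℝ → EReal)
    (hψconv : ∀ k, ∀ s t a b : ℝ, 0 ≤ a → 0 ≤ b → a + b = 1 →
      ψ k (a * s + b * t) ≤ (a : EReal) * ψ k s + (b : EReal) * ψ k t)
    (hψlsc : ∀ k, LowerSemicontinuous (ψ k))
    (hψbot : ∀ k t, ψ k t ≠ ⊥)
    (hψ0 : ∀ k, ψ k 0 = 0)
    (hψdiff : ∀ k, ∃ (F : ℝ → ℝ) (ε : ℝ), 0 < ε ∧
      (∀ t : ℝ, |t| < ε → ψ k t = (F t : EReal)) ∧ HasDerivAt F 0 0)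
    (h : lp (fun _ : ℕ => ℝ) 2 → ℝ) (h' : lp (fun _ : ℕ => ℝ) 2 → lp (fun _ : ℕ => ℝ) 2)
    (hhconv : ConvexOn ℝ Set.univ h) (hhbdd : BddBelow (Set.range h))
    (hhgrad : ∀ x, HasGradientAt h (h' x) x)
    (hhlip : LipschitzWith (Real.toNNReal L) h')
    (g f : lp (fun _ : ℕ => ℝ) 2 → EReal)
    (hg : ∀ x, g x = ∑' k, (ψ k (x k) + ⨆ s ∈ I k, ((s * x k : ℝ) : EReal)))
    (hf : ∀ x, f x = g x + ((h x : ℝ) : EReal))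
    (xbar : lp (fun _ : ℕ => ℝ) 2)
    (hmin : ∀ y, f xbar ≤ f y)
    (hqri : (∀ y, f xbar + ((⟪(0 : lp (fun _ : ℕ => ℝ) 2), y - xbar⟫ : ℝ) : EReal) ≤ f y)
      ∧ ∃ S : Submodule ℝ (lp (fun _ : ℕ => ℝ) 2),
        closure {z : lp (fun _ : ℕ => ℝ) 2 | ∃ t : ℝ, 0 ≤ t ∧
            ∃ u : lp (fun _ : ℕ => ℝ) 2,
              (∀ y, f xbar + ((⟪u, y - xbar⟫ : ℝ) : EReal) ≤ f y) ∧ z = t • u}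
          = (S : Set (lp (fun _ : ℕ => ℝ) 2))) :
    {k : ℕ | xbar k ≠ 0} ∪ {k : ℕ | -(h' xbar k) ∈ frontier (I k)}
      = {k : ℕ | xbar k ≠ 0} :=
  stmt_15_general ω hω I hIcl hIconn hIsub ψ hψconv hψ0 hψdiff h h' hhconv hhgrad g f hg hf xbar
    hmin hqri
end
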